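/- For all integers d >= 2, n >= 2, and k with 1 <= k < log_d(n-1) - 1, the k-subdivision of the complete graph K_n has twin-width at least d. -/

import Mathlib

namespace TwwPaper

open Finset

/-! ### Twin-width via contraction (partition-merge) sequences -/

/-- Two parts `P`, `Q` are *pure* (homogeneous) in `G`: the graph is either complete or empty
between them.  In the trigraph of a partition, a non-pure pair of parts is joined by a red edge. -/
def Pure {V : Type*} (G : SimpleGraph V) (P Q : Finset V) : Prop :=
  (∀ x ∈ P, ∀ y ∈ Q, G.Adj x y) ∨ (∀ x ∈ P, ∀ y ∈ Q, ¬ G.Adj x y)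

/-- The red degree of a part `P` in the partition `PP`: the number of other parts that are
not pure with respect to `P`. -/
noncomputable def redDeg {V : Type*} (G : SimpleGraph V) (PP : Finset (Finset V)) (P : Finset V) : ℕ :=
  {Q | Q ∈ PP ∧ Q ≠ P ∧ ¬ Pure G P Q}.ncard

/-- `QQ` is obtained from `PP` by merging (contracting) two parts. -/
def Merge {V : Type*} [DecidableEq V] (PP QQ : Finset (Finset V)) : Prop :=
  ∃ A ∈ PP, ∃ B ∈ PP, A ≠ B ∧ QQ = insert (A ∪ B) ((PP.erase A).erase B)

/-- One contraction step keeping every red degree at most `d`. -/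
def Step {V : Type*} [DecidableEq V] (G : SimpleGraph V) (d : ℕ) (PP QQ : Finset (Finset V)) :
    Prop :=
  Merge PP QQ ∧ ∀ P ∈ QQ, redDeg G QQ P ≤ d

/-- `G` admits a `d`-contraction sequence: starting from the partition into singletons one can
merge two parts at a time, always keeping all red degrees at most `d`, until one part remains. -/
def TwwLE {V : Type*} [Fintype V] [DecidableEq V] (G : SimpleGraph V) (d : ℕ) : Prop :=
  Relation.ReflTransGen (Step G d)
    (Finset.univ.image fun v => ({v} : Finset V)) {Finset.univ}

/-- The twin-width of a finite simple graph. -/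
noncomputable def tww {V : Type*} [Fintype V] [DecidableEq V] (G : SimpleGraph V) : ℕ :=
  sInf {d | TwwLE G d}

/-! ### Minors, separators, subgraph containment -/

/-- `H` is a minor of `G`: there is a minor model, i.e. pairwise disjoint nonempty connected
branch sets, one for each vertex of `H`, with an edge of `G` between the branch sets of any two
adjacent vertices of `H`. -/
def IsMinor {α β : Type*} (H : SimpleGraph α) (G : SimpleGraph β) : Prop :=
  ∃ f : α → Set β,
    (∀ a, (f a).Nonempty) ∧
    (∀ a, (G.induce (f a)).Connected) ∧
    (∀ a b, a ≠ b → Disjoint (f a) (f b)) ∧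
    ∀ a b, H.Adj a b → ∃ x ∈ f a, ∃ y ∈ f b, G.Adj x y

/-- `S` is a separator of `G` : deleting `S` leaves a nonempty disconnected graph. -/
def Sep {α : Type*} (G : SimpleGraph α) (S : Set α) : Prop :=
  (Sᶜ : Set α).Nonempty ∧ ¬ (G.induce Sᶜ).Preconnected

/-- `G` contains `F` as a (not necessarily induced) subgraph. -/
def ContainsSubgraph {α β : Type*} (G : SimpleGraph β) (F : SimpleGraph α) : Prop :=
  ∃ f : α → β, Function.Injective f ∧ ∀ a b, F.Adj a b → G.Adj (f a) (f b)

/-- `G` is internally 4-connected. -/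
def Internally4Connected {α : Type*} [Fintype α] (G : SimpleGraph α) : Prop :=
  5 ≤ Fintype.card α ∧
  (∀ S : Set α, S.ncard < 3 → ¬ Sep G S) ∧
  ∀ S : Set α, S.ncard = 3 → Sep G S →
    (∀ a ∈ S, ∀ b ∈ S, ¬ G.Adj a b) ∧ ∃ v ∉ S, G.neighborSet v = S

/-! ### The concrete graphs -/

/-- `K₆` minus one edge. -/
def K6minus : SimpleGraph (Fin 6) where
  Adj a b := a ≠ b ∧ ¬(({a, b} : Finset (Fin 6)) = {0, 1})
  symm := .mk <| by
    rintro a b ⟨h1, h2⟩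
    exact ⟨h1.symm, by rwa [Finset.pair_comm]⟩
  loopless := ⟨fun a h => h.1 rfl⟩

/-- The complement of the 7-cycle. -/
def C7c : SimpleGraph (Fin 7) := (SimpleGraph.cycleGraph 7)ᶜ

/-- Join of two graphs. -/
def joinG {α β : Type*} (G : SimpleGraph α) (H : SimpleGraph β) : SimpleGraph (α ⊕ β) where
  Adj x y :=
    match x, y with
    | Sum.inl a, Sum.inl b => G.Adj a b
    | Sum.inr a, Sum.inr b => H.Adj a b
    | _, _ => True
  symm := .mk <| by
    rintro (a | a) (b | b) h
    · exact G.symm.symm _ _ h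
    · exact trivial
    · exact trivial
    · exact H.symm.symm _ _ h
  loopless := .mk <| by
    rintro (a | a) h
    · exact G.loopless.irrefl a h
    · exact H.loopless.irrefl a h

/-- The join of `C₅` with the complement of `K₂` (two isolated vertices). -/
def C5K2c : SimpleGraph (Fin 5 ⊕ Fin 2) :=
  joinG (SimpleGraph.cycleGraph 5) (⊥ : SimpleGraph (Fin 2))

/-- The part of a vertex of `K_{3,1,3}`: `{0,1,2}`, `{3}`, `{4,5,6}`. -/
def triPart : Fin 7 → ℕ := fun a => if a.val < 3 then 0 else if a.val = 3 then 1 else 2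

/-- `K_{3,1̂,3}`: the complete tripartite graph `K_{3,1,3}` minus one edge from the middle
vertex `3` to each of the two size-3 parts (the edges `{0,3}` and `{3,4}`). -/
def K313hat : SimpleGraph (Fin 7) where
  Adj a b := triPart a ≠ triPart b ∧ ¬(({a, b} : Finset (Fin 7)) = {0, 3}) ∧
    ¬(({a, b} : Finset (Fin 7)) = {3, 4})
  symm := .mk <| by
    rintro a b ⟨h1, h2, h3⟩
    refine ⟨h1.symm, ?_, ?_⟩ <;> rwa [Finset.pair_comm]
  loopless := ⟨fun a h => h.1 rfl⟩

/-- The cube graph `Q₃`. -/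
def Q3 : SimpleGraph (Fin 2 × Fin 2 × Fin 2) where
  Adj x y := (x.1 ≠ y.1 ∧ x.2 = y.2) ∨ (x.1 = y.1 ∧ x.2.1 ≠ y.2.1 ∧ x.2.2 = y.2.2) ∨
    (x.1 = y.1 ∧ x.2.1 = y.2.1 ∧ x.2.2 ≠ y.2.2)
  symm := .mk <| by
    rintro x y (⟨h1, h2⟩ | ⟨h1, h2, h3⟩ | ⟨h1, h2, h3⟩)
    · exact Or.inl ⟨h1.symm, h2.symm⟩
    · exact Or.inr (Or.inl ⟨h1.symm, h2.symm, h3.symm⟩)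
    · exact Or.inr (Or.inr ⟨h1.symm, h2.symm, h3.symm⟩)
  loopless := .mk <| by
    rintro x (⟨h, -⟩ | ⟨-, h, -⟩ | ⟨-, -, h⟩) <;> exact h rfl

/-- The Wagner graph `V₈`: the 8-cycle plus the four main diagonals. -/
def V8 : SimpleGraph (Fin 8) where
  Adj a b := a ≠ b ∧ (b = a + 1 ∨ a = b + 1 ∨ b = a + 4)
  symm := .mk <| by
    rintro a b ⟨h, h1 | h1 | h1⟩
    · exact ⟨h.symm, Or.inr (Or.inl h1)⟩
    · exact ⟨h.symm, Or.inl h1⟩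
    · refine ⟨h.symm, Or.inr (Or.inr ?_)⟩
      subst h1
      have h4 : (4 : Fin 8) + 4 = 0 := by decide
      rw [add_assoc, h4, add_zero]
  loopless := .mk <| by rintro a ⟨h, -⟩; exact h rfl

/-- `K₆` minus a perfect matching (`K₆^≡`), i.e. the octahedron `K_{2,2,2}`. -/
def K6mm3 : SimpleGraph (Fin 6) where
  Adj a b := a.val % 3 ≠ b.val % 3
  symm := ⟨fun _ _ h => h.symm⟩
  loopless := ⟨fun _ h => h rfl⟩

/-- `K₆` minus a matching of size two (`K₆^=`). -/
def K6mm2 : SimpleGraph (Fin 6) where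
  Adj a b := a ≠ b ∧ ¬(({a, b} : Finset (Fin 6)) = {0, 3}) ∧
    ¬(({a, b} : Finset (Fin 6)) = {1, 4})
  symm := .mk <| by
    rintro a b ⟨h1, h2, h3⟩
    refine ⟨h1.symm, ?_, ?_⟩ <;> rwa [Finset.pair_comm]
  loopless := ⟨fun a h => h.1 rfl⟩

/-- The join of the complement of `C₆` with a single vertex. -/
def C6cK1 : SimpleGraph (Fin 6 ⊕ Fin 1) :=
  joinG ((SimpleGraph.cycleGraph 6)ᶜ) (⊥ : SimpleGraph (Fin 1))

/-- A perfect matching graph on `Fin m` (`m` even): `2i` is matched to `2i+1`. -/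
def matchingGraph (m : ℕ) : SimpleGraph (Fin m) where
  Adj a b := a ≠ b ∧ a.val / 2 = b.val / 2
  symm := ⟨fun _ _ h => ⟨h.1.symm, h.2.symm⟩⟩
  loopless := ⟨fun _ h => h.1 rfl⟩

/-- The `m × n` grid graph. -/
def gridGraph (m n : ℕ) : SimpleGraph (Fin m × Fin n) where
  Adj p q := (p.1 = q.1 ∧ (p.2.val + 1 = q.2.val ∨ q.2.val + 1 = p.2.val)) ∨
    (p.2 = q.2 ∧ (p.1.val + 1 = q.1.val ∨ q.1.val + 1 = p.1.val))
  symm := .mk <| by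
    rintro p q (⟨h1, h2⟩ | ⟨h1, h2⟩)
    · exact Or.inl ⟨h1.symm, h2.symm⟩
    · exact Or.inr ⟨h1.symm, h2.symm⟩
  loopless := .mk <| by rintro p (⟨-, h | h⟩ | ⟨-, h | h⟩) <;> omega

/-! ### `(Δ,Y)`-operation -/

/-- The `(Δ,Y)`-operation on the triangle `{x,y,z}` of `G`: delete the edges of the triangle
and add a new vertex (`none`) adjacent exactly to `x`, `y`, `z`. -/
def deltaY {α : Type*} (G : SimpleGraph α) (x y z : α) : SimpleGraph (Option α) where
  Adj a b :=
    match a, b with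
    | some a, some b => G.Adj a b ∧ ¬((a = x ∨ a = y ∨ a = z) ∧ (b = x ∨ b = y ∨ b = z))
    | some a, none => a = x ∨ a = y ∨ a = z
    | none, some b => b = x ∨ b = y ∨ b = z
    | none, none => False
  symm := .mk <| by
    rintro (_ | a) (_ | b) h
    · exact h.elim
    · exact h
    · exact h
    · exact ⟨h.1.symm, fun hc => h.2 ⟨hc.2, hc.1⟩⟩
  loopless := .mk <| by
    rintro (_ | a) h
    · exact h
    · exact G.loopless.irrefl a h.1

/-- `G` has a spanning subgraph isomorphic to a member of
`𝓕₃ = {K₆⁻, C₇ᶜ, C₅ + K₂ᶜ, K_{3,1̂,3}, Q₃, V₈}`. -/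
def HasSpanningF3 {α : Type*} (G : SimpleGraph α) : Prop :=
  ∃ H : SimpleGraph α, H ≤ G ∧
    (Nonempty (H ≃g K6minus) ∨ Nonempty (H ≃g C7c) ∨ Nonempty (H ≃g C5K2c) ∨
      Nonempty (H ≃g K313hat) ∨ Nonempty (H ≃g Q3) ∨ Nonempty (H ≃g V8))

/-- `G` has a minor in `𝓕₃`. -/
def HasF3Minor {α : Type*} (G : SimpleGraph α) : Prop :=
  IsMinor K6minus G ∨ IsMinor C7c G ∨ IsMinor C5K2c G ∨ IsMinor K313hat G ∨
    IsMinor Q3 G ∨ IsMinor V8 G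

/-! ### Subdivisions -/

/-- Vertices of the subdivision of `G` in which the edge `ab` (with `a < b`) receives
`ℓ a b` internal (subdivision) vertices: the original vertices plus, for each oriented edge,
`ℓ a b` new vertices. -/
def SubdivVert {α : Type*} [LT α] (G : SimpleGraph α) (ℓ : α → α → ℕ) : Type _ :=
  α ⊕ Σ e : {p : α × α // p.1 < p.2 ∧ G.Adj p.1 p.2}, Fin (ℓ e.1.1 e.1.2)

noncomputable instance SubdivVert.instFintype {α : Type*} [LT α] [Fintype α]
    (G : SimpleGraph α) (ℓ : α → α → ℕ) : Fintype (SubdivVert G ℓ) := by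
  classical
  unfold SubdivVert
  infer_instance

noncomputable instance SubdivVert.instDecidableEq {α : Type*} [LT α] [DecidableEq α]
    (G : SimpleGraph α) (ℓ : α → α → ℕ) : DecidableEq (SubdivVert G ℓ) := by
  classical
  unfold SubdivVert
  infer_instance

/-- The subdivision of `G` in which each edge `ab` (`a < b`) is replaced by a path with
`ℓ a b` internal vertices (so of length `ℓ a b + 1`); an edge with `ℓ a b = 0` stays an edge. -/
def Subdiv {α : Type*} [LT α] (G : SimpleGraph α) (ℓ : α → α → ℕ) :
    SimpleGraph (SubdivVert G ℓ) where
  Adj x y :=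
    match x, y with
    | Sum.inl a, Sum.inl b =>
        G.Adj a b ∧ ((a < b ∧ ℓ a b = 0) ∨ (b < a ∧ ℓ b a = 0))
    | Sum.inl a, Sum.inr ei =>
        (a = ei.1.1.1 ∧ (ei.2 : ℕ) = 0) ∨ (a = ei.1.1.2 ∧ (ei.2 : ℕ) + 1 = ℓ ei.1.1.1 ei.1.1.2)
    | Sum.inr ei, Sum.inl a =>
        (a = ei.1.1.1 ∧ (ei.2 : ℕ) = 0) ∨ (a = ei.1.1.2 ∧ (ei.2 : ℕ) + 1 = ℓ ei.1.1.1 ei.1.1.2)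
    | Sum.inr ei, Sum.inr ej =>
        ei.1 = ej.1 ∧ ((ei.2 : ℕ) + 1 = (ej.2 : ℕ) ∨ (ej.2 : ℕ) + 1 = (ei.2 : ℕ))
  symm := .mk <| by
    rintro (a | ei) (b | ej) h
    · exact ⟨h.1.symm, h.2.symm⟩
    · exact h
    · exact h
    · exact ⟨h.1.symm, h.2.symm⟩
  loopless := .mk <| by
    rintro (a | ei) h
    · exact G.loopless.irrefl a h.1
    · rcases h.2 with h' | h' <;> omega

/-- Lexicographic order on the vertex set of a grid, used to orient its edges. -/
def lexLT {m n : ℕ} : LT (Fin m × Fin n) :=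
  ⟨fun p q => p.1 < q.1 ∨ (p.1 = q.1 ∧ p.2 < q.2)⟩


/-!
Suppose `H` has a contraction sequence of red degree at most `D < d`, and stop at the first
partition in which some part `P` contains two branch vertices `u` and `v`. For every branch vertex
`w ≠ u`, walk along the subdivided path from `u` to `w`. The walk stops in a part that contains
`w`, or that contains no branch vertex and meets the interior of no other path from `u`. Until
then, the current part contains a vertex non-adjacent to the next path vertex (`v` at the start,
later a branch vertex or an interior vertex of another path from `u`), while the current path
vertex is adjacent to it; so every change of part follows a red edge. The `n - 1` parts reached
are distinct and lie within red distance `k + 1` of `P`, whence `n - 1 ≤ (D + 1) ^ (k + 1)`,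
contradicting `d ^ (k + 1) < n - 1`.
-/

end TwwPaper

lemma Relation.ReflTransGen.exists_exit {V : Type*} {r : V → V → Prop} {p : V → Prop} {a b : V}
    (h : Relation.ReflTransGen r a b) (ha : p a) (hb : ¬ p b) :
    ∃ x y, Relation.ReflTransGen r a x ∧ r x y ∧ p x ∧ ¬ p y := by
  induction h with
  | refl => exact absurd ha hb
  | @tail c c' hac hcc' ih =>
    by_cases hc : p c
    · exact ⟨c, c', hac, hcc', hc, hb⟩
    · exact ih hc

lemma Set.Subsingleton.union_sdiff_singleton {α : Type*} {s t : Set α} {a : α}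
    (hs : s.Subsingleton) (ht : t.Subsingleton) (ha : a ∈ s ∪ t) :
    ((s ∪ t) \ {a}).Subsingleton := by
  rcases ha with ha | ha
  · exact ht.anti fun x hx => hx.1.resolve_left fun hxs => hx.2 (hs hxs ha)
  · exact hs.anti fun x hx => hx.1.resolve_right fun hxt => hx.2 (ht hxt ha)

namespace TwwPaper

open Finset

section Partition

variable {V : Type*}

lemma redDeg_le_card (G : SimpleGraph V) (PP : Finset (Finset V)) (P : Finset V) :
    redDeg G PP P ≤ PP.card := by
  rw [← Set.ncard_coe_finset PP]
  exact Set.ncard_le_ncard (fun Q hQ => hQ.1) PP.finite_toSet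

variable [DecidableEq V]

def Covers (PP : Finset (Finset V)) : Prop :=
  ∀ x, ∃ Q ∈ PP, x ∈ Q

lemma mem_merge_iff {PP : Finset (Finset V)} {A B Q : Finset V} :
    Q ∈ insert (A ∪ B) ((PP.erase A).erase B) ↔ Q = A ∪ B ∨ (Q ≠ B ∧ Q ≠ A ∧ Q ∈ PP) := by
  simp only [mem_insert, mem_erase]

lemma Covers.merge {PP QQ : Finset (Finset V)} (h : Covers PP) (hm : Merge PP QQ) :
    Covers QQ := by
  obtain ⟨A, -, B, -, -, rfl⟩ := hm
  intro x
  obtain ⟨Q, hQ, hxQ⟩ := h x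
  by_cases hQA : Q = A
  · exact ⟨A ∪ B, mem_insert_self _ _, mem_union_left _ (hQA ▸ hxQ)⟩
  by_cases hQB : Q = B
  · exact ⟨A ∪ B, mem_insert_self _ _, mem_union_right _ (hQB ▸ hxQ)⟩
  exact ⟨Q, mem_merge_iff.2 (Or.inr ⟨hQB, hQA, hQ⟩), hxQ⟩

lemma covers_singletons [Fintype V] : Covers (univ.image fun v : V => ({v} : Finset V)) :=
  fun x => ⟨{x}, mem_image_of_mem _ (mem_univ x), mem_singleton_self x⟩

lemma Covers.of_reflTransGen {G : SimpleGraph V} {d : ℕ} {PP QQ : Finset (Finset V)}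
    (h : Covers PP) (hr : Relation.ReflTransGen (Step G d) PP QQ) : Covers QQ := by
  induction hr with
  | refl => exact h
  | tail _ hstep ih => exact ih.merge hstep.1

lemma reflTransGen_step_univ [Fintype V] [Nonempty V] (G : SimpleGraph V) :
    ∀ PP : Finset (Finset V), Covers PP → PP.card ≤ Fintype.card V →
      Relation.ReflTransGen (Step G (Fintype.card V)) PP {univ} := by
  intro PP
  induction hN : PP.card using Nat.strong_induction_on generalizing PP with
  | _ N ih =>
    intro hcov hcard
    obtain ⟨Q, hQ, -⟩ := hcov (Classical.arbitrary V)
    by_cases h1 : PP.card ≤ 1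
    · obtain ⟨A, rfl⟩ := card_eq_one.1 (le_antisymm h1 (card_pos.2 ⟨Q, hQ⟩))
      have hA : A = univ := eq_univ_of_forall fun x => by
        obtain ⟨Q, hQ, hxQ⟩ := hcov x
        rwa [mem_singleton.1 hQ] at hxQ
      rw [hA]
    · obtain ⟨A, hA, B, hB, hAB⟩ := one_lt_card.1 (not_le.1 h1)
      set QQ := insert (A ∪ B) ((PP.erase A).erase B)
      have hQQ : QQ.card < N := (card_insert_le _ _).trans_lt <| by
        rw [card_erase_of_mem (mem_erase.2 ⟨hAB.symm, hB⟩), card_erase_of_mem hA]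
        omega
      have hmerge : Merge PP QQ := ⟨A, hA, B, hB, hAB, rfl⟩
      refine .head ⟨hmerge, fun P _ => (redDeg_le_card G QQ P).trans (by omega)⟩ ?_
      exact ih _ hQQ QQ rfl (hcov.merge hmerge) (by omega)

lemma twwLE_card [Fintype V] [Nonempty V] (G : SimpleGraph V) : TwwLE G (Fintype.card V) :=
  reflTransGen_step_univ G _ covers_singletons (card_image_le.trans (by simp))

end Partition

section FirstCollision

variable {V ι : Type*} [Fintype V] [DecidableEq V] {G : SimpleGraph V} {D : ℕ}

/-- The partition right after the first merge that puts two vertices of the image of `b` into one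
part. -/
lemma TwwLE.exists_collision (hG : TwwLE G D) [Nontrivial ι] {b : ι → V}
    (hb : Function.Injective b) :
    ∃ PP : Finset (Finset V), Covers PP ∧ (∀ Q ∈ PP, redDeg G PP Q ≤ D) ∧
      ∃ P ∈ PP, ∃ u v, v ≠ u ∧ b u ∈ P ∧ b v ∈ P ∧
        ∀ R ∈ PP, (b ⁻¹' ↑R \ {u}).Subsingleton := by
  let Separating : Finset (Finset V) → Prop := fun PP => ∀ R ∈ PP, (b ⁻¹' ↑R).Subsingleton
  have hstart : Separating (univ.image fun v : V => ({v} : Finset V)) := by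
    intro R hR
    obtain ⟨x, -, rfl⟩ := mem_image.1 hR
    rw [coe_singleton]
    exact Set.subsingleton_singleton.preimage hb
  have hend : ¬ Separating {univ} := fun h =>
    not_subsingleton ι (by simpa using h univ (mem_singleton_self _))
  obtain ⟨PP, QQ, hreach, ⟨hmerge, hred⟩, hsepPP, hsepQQ⟩ :=
    Relation.ReflTransGen.exists_exit hG hstart hend
  have hcov : Covers QQ := (covers_singletons.of_reflTransGen hreach).merge hmerge
  obtain ⟨A, hA, B, hB, -, rfl⟩ := hmerge
  have hsep : ∀ R ∈ insert (A ∪ B) ((PP.erase A).erase B), R ≠ A ∪ B →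
      (b ⁻¹' ↑R).Subsingleton := fun R hR hne =>
    hsepPP R ((mem_merge_iff.1 hR).resolve_left hne).2.2
  obtain ⟨R, hR, hnsub⟩ := not_forall₂.1 hsepQQ
  obtain rfl : R = A ∪ B := by_contra fun hne => hnsub (hsep R hR hne)
  obtain ⟨u, hu, v, hv, hvu⟩ := Set.not_subsingleton_iff.1 hnsub
  refine ⟨_, hcov, hred, A ∪ B, mem_insert_self _ _, u, v, hvu.symm, hu, hv, fun R hR => ?_⟩
  by_cases hRAB : R = A ∪ B
  · subst hRAB
    rw [coe_union, Set.preimage_union] at hu ⊢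
    exact (hsepPP A hA).union_sdiff_singleton (hsepPP B hB) hu
  · exact (hsep R hR hRAB).anti Set.sdiff_subset

end FirstCollision

section RedBall

variable {V : Type*} {G : SimpleGraph V} {P Q Q' : Finset V}

lemma not_pure_of_adj_of_not_adj {x y z : V} (hx : x ∈ Q) (hy : y ∈ Q') (hxy : G.Adj x y)
    (hz : z ∈ Q) (hzy : ¬ G.Adj z y) : ¬ Pure G Q Q' := by
  rintro (hall | hnone)
  · exact hzy (hall z hz y hy)
  · exact hnone x hx y hy hxy

variable [DecidableEq V] {PP : Finset (Finset V)}

open Classical in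
noncomputable def redNbhd (G : SimpleGraph V) (PP : Finset (Finset V)) (Q : Finset V) :
    Finset (Finset V) :=
  {Q' ∈ PP | Q' ≠ Q ∧ ¬ Pure G Q Q'}

@[simp] lemma mem_redNbhd : Q' ∈ redNbhd G PP Q ↔ Q' ∈ PP ∧ Q' ≠ Q ∧ ¬ Pure G Q Q' := by
  simp [redNbhd]

lemma card_redNbhd : (redNbhd G PP Q).card = redDeg G PP Q := by
  rw [redDeg, ← Set.ncard_coe_finset]
  congr 1
  ext Q'
  simp

noncomputable def redBall (G : SimpleGraph V) (PP : Finset (Finset V)) (P : Finset V) :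
    ℕ → Finset (Finset V)
  | 0 => {P}
  | i + 1 => redBall G PP P i ∪ (redBall G PP P i).biUnion (redNbhd G PP)

lemma redBall_subset (hP : P ∈ PP) (i : ℕ) : redBall G PP P i ⊆ PP := by
  induction i with
  | zero => simpa [redBall] using hP
  | succ i ih =>
    refine union_subset ih fun Q hQ => ?_
    obtain ⟨R, -, hR⟩ := mem_biUnion.1 hQ
    exact (mem_redNbhd.1 hR).1

lemma redBall_mono : Monotone (redBall G PP P) :=
  monotone_nat_of_le_succ fun _ => subset_union_left

lemma mem_redBall_succ {i : ℕ} (hQ : Q ∈ redBall G PP P i) (hQ' : Q' ∈ PP) (hne : Q' ≠ Q)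
    (hred : ¬ Pure G Q Q') : Q' ∈ redBall G PP P (i + 1) :=
  mem_union_right _ (mem_biUnion.2 ⟨Q, hQ, mem_redNbhd.2 ⟨hQ', hne, hred⟩⟩)

lemma card_redBall_le {D : ℕ} (hred : ∀ Q ∈ PP, redDeg G PP Q ≤ D) (hP : P ∈ PP) (i : ℕ) :
    (redBall G PP P i).card ≤ (D + 1) ^ i := by
  induction i with
  | zero => simp [redBall]
  | succ i ih =>
    have hnbhd : ((redBall G PP P i).biUnion (redNbhd G PP)).card ≤ (redBall G PP P i).card * D :=
      card_biUnion_le_card_mul _ _ _ fun Q hQ =>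
        card_redNbhd.trans_le (hred Q (redBall_subset hP i hQ))
    calc (redBall G PP P (i + 1)).card
        ≤ (redBall G PP P i).card + (redBall G PP P i).card * D := (card_union_le _ _).trans
          (Nat.add_le_add_left hnbhd _)
      _ = (redBall G PP P i).card * (D + 1) := by ring
      _ ≤ (D + 1) ^ (i + 1) := by rw [pow_succ]; exact Nat.mul_le_mul_right _ ih

end RedBall

section Spider

variable {V ι : Type*} {G : SimpleGraph V} {b : ι → V} {u : ι} {k : ℕ} {x : ι → ℕ → V}

/-- `x w` is the leg of length `k + 1` from the centre `b u` to the branch vertex `b w`. -/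
structure IsSpider (G : SimpleGraph V) (b : ι → V) (u : ι) (k : ℕ) (x : ι → ℕ → V) : Prop where
  leg_zero : ∀ w, x w 0 = b u
  leg_last : ∀ w, x w (k + 1) = b w
  adj_leg : ∀ w ≠ u, ∀ j ≤ k, G.Adj (x w j) (x w (j + 1))
  eq_of_adj_branch : ∀ w ≠ u, ∀ a ≠ w, ∀ j, 1 ≤ j → j ≤ k + 1 → G.Adj (b a) (x w j) →
    a = u ∧ j = 1
  not_adj_legs : ∀ w ≠ u, ∀ w' ≠ u, w' ≠ w → ∀ m, 1 ≤ m → m ≤ k → ∀ j, 2 ≤ j → j ≤ k + 1 →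
    ¬ G.Adj (x w' m) (x w j)

lemma IsSpider.map {W : Type*} {G' : SimpleGraph W} (hS : IsSpider G b u k x) (e : G ≃g G') :
    IsSpider G' (e ∘ b) u k fun w j => e (x w j) where
  leg_zero w := congrArg e (hS.leg_zero w)
  leg_last w := congrArg e (hS.leg_last w)
  adj_leg w hw j hj := e.map_adj_iff.2 (hS.adj_leg w hw j hj)
  eq_of_adj_branch w hw a ha j hj1 hjk hadj :=
    hS.eq_of_adj_branch w hw a ha j hj1 hjk (e.map_adj_iff.1 hadj)
  not_adj_legs w hw w' hw' hww' m hm1 hmk j hj2 hjk :=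
    mt e.map_adj_iff.1 (hS.not_adj_legs w hw w' hw' hww' m hm1 hmk j hj2 hjk)

/-- The parts charged to `w` when counting the red ball. -/
def Owns (b : ι → V) (x : ι → ℕ → V) (u : ι) (k : ℕ) (R : Finset V) (w : ι) : Prop :=
  b w ∈ R ∨ ((∀ a, b a ∉ R) ∧ ∀ w' ≠ u, (∃ m, 1 ≤ m ∧ m ≤ k ∧ x w' m ∈ R) ↔ w' = w)

lemma Owns.eq {R : Finset V} {w w' : ι} (h : Owns b x u k R w) (h' : Owns b x u k R w')
    (hR : (b ⁻¹' ↑R \ {u}).Subsingleton) (hw : w ≠ u) (hw' : w' ≠ u) : w = w' := by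
  rcases h with hwR | ⟨hnone, hlegs⟩ <;> rcases h' with hw'R | ⟨hnone', hlegs'⟩
  · exact hR ⟨hwR, hw⟩ ⟨hw'R, hw'⟩
  · exact absurd hwR (hnone' w)
  · exact absurd hw'R (hnone w')
  · exact (hlegs' w hw).1 ((hlegs w hw).2 rfl)

lemma IsSpider.exists_not_adj (hS : IsSpider G b u k x) {Q : Finset V} {w : ι} {j : ℕ}
    (hw : w ≠ u) (hown : ¬ Owns b x u k Q w) (hj1 : 1 ≤ j) (hjk : j ≤ k) (hxQ : x w j ∈ Q) :
    ∃ z ∈ Q, ¬ G.Adj z (x w (j + 1)) := by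
  simp only [Owns, not_or, not_and] at hown
  by_cases hbranch : ∃ a, b a ∈ Q
  · obtain ⟨a, ha⟩ := hbranch
    have haw : a ≠ w := by rintro rfl; exact hown.1 ha
    exact ⟨b a, ha, fun hadj =>
      absurd (hS.eq_of_adj_branch w hw a haw (j + 1) (by omega) (by omega) hadj).2 (by omega)⟩
  · obtain ⟨w', hw'u, hiff⟩ := not_forall₂.1 (hown.2 (not_exists.1 hbranch))
    have hw'w : w' ≠ w := by
      rintro rfl
      exact hiff (iff_of_true ⟨j, hj1, hjk, hxQ⟩ rfl)
    obtain ⟨m, hm1, hmk, hxm⟩ := not_not.1 fun h => hiff (iff_of_false h hw'w)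
    exact ⟨_, hxm, hS.not_adj_legs w hw w' hw'u hw'w m hm1 hmk (j + 1) (by omega) (by omega)⟩

variable [DecidableEq V] {PP : Finset (Finset V)} {P : Finset V} {v : ι}

lemma IsSpider.exists_mem_redBall_succ (hS : IsSpider G b u k x) (hcov : Covers PP)
    (hv : b v ∈ P) (hvu : v ≠ u) {Q : Finset V} {w : ι} {j : ℕ} (hw : w ≠ u) (hjk : j ≤ k)
    (hQ : Q ∈ redBall G PP P j) (hxQ : x w j ∈ Q) (hown : ¬ Owns b x u k Q w) :
    ∃ Q' ∈ redBall G PP P (j + 1), x w (j + 1) ∈ Q' := by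
  by_cases hnext : x w (j + 1) ∈ Q
  · exact ⟨Q, redBall_mono j.le_succ hQ, hnext⟩
  obtain ⟨z, hzQ, hz⟩ : ∃ z ∈ Q, ¬ G.Adj z (x w (j + 1)) := by
    rcases Nat.eq_zero_or_pos j with rfl | hj1
    · obtain rfl : Q = P := by simpa [redBall] using hQ
      have hvw : v ≠ w := by rintro rfl; exact hown (.inl hv)
      exact ⟨b v, hv, fun hadj => hvu (hS.eq_of_adj_branch w hw v hvw 1 le_rfl (by omega) hadj).1⟩
    · exact hS.exists_not_adj hw hown hj1 hjk hxQ
  obtain ⟨Q', hQ', hxQ'⟩ := hcov (x w (j + 1))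
  refine ⟨Q', mem_redBall_succ hQ hQ' (fun h => hnext (h ▸ hxQ')) ?_, hxQ'⟩
  exact not_pure_of_adj_of_not_adj hxQ hxQ' (hS.adj_leg w hw j hjk) hzQ hz

lemma IsSpider.exists_owns_mem_redBall (hS : IsSpider G b u k x) (hcov : Covers PP)
    (hu : b u ∈ P) (hv : b v ∈ P) (hvu : v ≠ u) {w : ι} (hw : w ≠ u) :
    ∃ R ∈ redBall G PP P (k + 1), Owns b x u k R w := by
  have walk : ∀ j ≤ k + 1, (∃ R ∈ redBall G PP P (k + 1), Owns b x u k R w) ∨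
      ∃ Q ∈ redBall G PP P j, x w j ∈ Q := by
    intro j hj
    induction j with
    | zero => exact .inr ⟨P, mem_singleton_self P, hS.leg_zero w ▸ hu⟩
    | succ j ih =>
      obtain hdone | ⟨Q, hQ, hxQ⟩ := ih (by omega)
      · exact .inl hdone
      by_cases hown : Owns b x u k Q w
      · exact .inl ⟨Q, redBall_mono (by omega) hQ, hown⟩
      · exact .inr (hS.exists_mem_redBall_succ hcov hv hvu hw (by omega) hQ hxQ hown)
  obtain hdone | ⟨Q, hQ, hxQ⟩ := walk (k + 1) le_rfl
  · exact hdone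
  · exact ⟨Q, hQ, .inl (hS.leg_last w ▸ hxQ)⟩

lemma IsSpider.card_le [Fintype ι] {D : ℕ} (hS : IsSpider G b u k x) (hcov : Covers PP)
    (hred : ∀ Q ∈ PP, redDeg G PP Q ≤ D) (hP : P ∈ PP) (hu : b u ∈ P) (hv : b v ∈ P)
    (hvu : v ≠ u) (hsep : ∀ R ∈ PP, (b ⁻¹' ↑R \ {u}).Subsingleton) :
    Fintype.card ι ≤ (D + 1) ^ (k + 1) + 1 := by
  classical
  choose! f hf hown using fun w (hw : w ≠ u) => hS.exists_owns_mem_redBall hcov hu hv hvu hw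
  have hinj : Set.InjOn f ↑(univ.erase u) := fun w hw w' hw' hff => by
    have hw := ne_of_mem_erase hw
    have hw' := ne_of_mem_erase hw'
    exact (hown w hw).eq (hff ▸ hown w' hw') (hsep _ (redBall_subset hP _ (hf w hw))) hw hw'
  have hcard := card_le_card_of_injOn f (fun w hw => hf w (ne_of_mem_erase hw)) hinj
  rw [card_erase_of_mem (mem_univ u), card_univ] at hcard
  have := card_redBall_le hred hP (k + 1)
  omega

end Spider

section SubdividedEdge

variable {α : Type*} [LT α] {G : SimpleGraph α} {ℓ : α → α → ℕ}
  (E : {p : α × α // p.1 < p.2 ∧ G.Adj p.1 p.2})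

/-- The vertex at distance `j` from `E.1.1` on the path that replaces the edge `E`. -/
def edgeVert (j : ℕ) : SubdivVert G ℓ :=
  if hj0 : j = 0 then .inl E.1.1
  else if h : j ≤ ℓ E.1.1 E.1.2 then .inr ⟨E, ⟨j - 1, by omega⟩⟩
  else .inl E.1.2

@[simp] lemma edgeVert_zero : edgeVert (ℓ := ℓ) E 0 = .inl E.1.1 := dif_pos rfl

@[simp] lemma edgeVert_last : edgeVert (ℓ := ℓ) E (ℓ E.1.1 E.1.2 + 1) = .inl E.1.2 :=
  (dif_neg (by omega)).trans (dif_neg (by omega))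

lemma edgeVert_of_le {j : ℕ} (hj1 : 1 ≤ j) (hj : j ≤ ℓ E.1.1 E.1.2) :
    edgeVert (ℓ := ℓ) E j = .inr ⟨E, ⟨j - 1, by omega⟩⟩ :=
  (dif_neg (by omega)).trans (dif_pos hj)

lemma adj_edgeVert_succ {j : ℕ} (hj : j ≤ ℓ E.1.1 E.1.2) :
    (Subdiv G ℓ).Adj (edgeVert E j) (edgeVert E (j + 1)) := by
  rcases Nat.eq_zero_or_pos j with rfl | hj1
  · rcases Nat.eq_zero_or_pos (ℓ E.1.1 E.1.2) with hℓ | hℓ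
    · rw [show 0 + 1 = ℓ E.1.1 E.1.2 + 1 by omega, edgeVert_zero, edgeVert_last]
      exact ⟨E.2.2, .inl ⟨E.2.1, hℓ⟩⟩
    · rw [edgeVert_zero, edgeVert_of_le E le_rfl hℓ]
      exact .inl ⟨rfl, rfl⟩
  · rw [edgeVert_of_le E hj1 hj]
    rcases hj.lt_or_eq with hlt | hjeq
    · rw [edgeVert_of_le E (by omega) hlt]
      exact ⟨rfl, .inl (show j - 1 + 1 = j + 1 - 1 by omega)⟩
    · rw [show j + 1 = ℓ E.1.1 E.1.2 + 1 by omega, edgeVert_last]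
      exact .inr ⟨rfl, show j - 1 + 1 = ℓ E.1.1 E.1.2 by omega⟩

lemma adj_inl_edgeVert_iff {a : α} {j : ℕ} (hj1 : 1 ≤ j) (hj : j ≤ ℓ E.1.1 E.1.2) :
    (Subdiv G ℓ).Adj (.inl a) (edgeVert E j) ↔
      (a = E.1.1 ∧ j = 1) ∨ (a = E.1.2 ∧ j = ℓ E.1.1 E.1.2) := by
  rw [edgeVert_of_le E hj1 hj]
  change (a = E.1.1 ∧ j - 1 = 0) ∨ (a = E.1.2 ∧ j - 1 + 1 = ℓ E.1.1 E.1.2) ↔ _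
  rw [show j - 1 = 0 ↔ j = 1 by omega, show j - 1 + 1 = ℓ E.1.1 E.1.2 ↔ j = ℓ E.1.1 E.1.2 by omega]

end SubdividedEdge

section SubdividedComplete

variable {α : Type*} [LinearOrder α] {k : ℕ} {u w w' a : α} {j m : ℕ}

lemma not_adj_inl_inl {G : SimpleGraph α} (hk : 1 ≤ k) (a b : α) :
    ¬ (Subdiv G fun _ _ => k).Adj (.inl a) (.inl b) := by
  rintro ⟨-, ⟨-, h⟩ | ⟨-, h⟩⟩ <;> simp only at h <;> omega

/-- The vertex at distance `j` from `u` on the path from `u` to `w` in the `k`-subdivision of the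
complete graph; the edge is stored with its smaller end first, hence the reflection for `w < u`. -/
def legVert (k : ℕ) (u w : α) (j : ℕ) : SubdivVert (⊤ : SimpleGraph α) fun _ _ => k :=
  if h : u < w then edgeVert ⟨(u, w), h, h.ne⟩ j
  else if h : w < u then edgeVert ⟨(w, u), h, h.ne⟩ (k + 1 - j)
  else .inl u

lemma legVert_of_lt (h : u < w) (j : ℕ) :
    legVert k u w j = edgeVert ⟨(u, w), h, h.ne⟩ j :=
  dif_pos h

lemma legVert_of_gt (h : w < u) (j : ℕ) :
    legVert k u w j = edgeVert ⟨(w, u), h, h.ne⟩ (k + 1 - j) :=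
  (dif_neg h.not_gt).trans (dif_pos h)

lemma legVert_self (j : ℕ) : legVert k u u j = .inl u :=
  (dif_neg (lt_irrefl u)).trans (dif_neg (lt_irrefl u))

lemma legVert_zero : legVert k u w 0 = .inl u := by
  rcases lt_trichotomy u w with h | rfl | h
  · rw [legVert_of_lt h, edgeVert_zero]
  · exact legVert_self 0
  · rw [legVert_of_gt h]
    exact edgeVert_last _

lemma legVert_last : legVert k u w (k + 1) = .inl w := by
  rcases lt_trichotomy u w with h | rfl | h
  · rw [legVert_of_lt h]
    exact edgeVert_last _
  · exact legVert_self _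
  · rw [legVert_of_gt h, Nat.sub_self, edgeVert_zero]

lemma adj_legVert_succ (hwu : w ≠ u) (hj : j ≤ k) :
    (Subdiv ⊤ fun _ _ => k).Adj (legVert k u w j) (legVert k u w (j + 1)) := by
  rcases lt_or_gt_of_ne hwu with h | h
  · rw [legVert_of_gt h, legVert_of_gt h, show k + 1 - j = k - j + 1 by omega,
      show k + 1 - (j + 1) = k - j by omega]
    exact (adj_edgeVert_succ _ (show k - j ≤ k by omega)).symm
  · rw [legVert_of_lt h, legVert_of_lt h]
    exact adj_edgeVert_succ _ hj

lemma eq_of_adj_inl_legVert (hk : 1 ≤ k) (hwu : w ≠ u) (haw : a ≠ w) (hj1 : 1 ≤ j)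
    (hj : j ≤ k + 1) (hadj : (Subdiv ⊤ fun _ _ => k).Adj (.inl a) (legVert k u w j)) :
    a = u ∧ j = 1 := by
  rcases hj.lt_or_eq with hj | rfl
  · rcases lt_or_gt_of_ne hwu with h | h
    · rw [legVert_of_gt h, adj_inl_edgeVert_iff _ (by omega) (show k + 1 - j ≤ k by omega)]
        at hadj
      rcases hadj with ⟨rfl, -⟩ | ⟨rfl, h⟩
      · exact absurd rfl haw
      · exact ⟨rfl, by omega⟩
    · rw [legVert_of_lt h, adj_inl_edgeVert_iff _ hj1 (show j ≤ k by omega)] at hadj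
      exact hadj.resolve_right fun h => haw h.1
  · rw [legVert_last] at hadj
    exact absurd hadj (not_adj_inl_inl hk a w)

lemma legVert_eq_inr (huw : u ≠ w) (hj1 : 1 ≤ j) (hjk : j ≤ k) :
    ∃ E i, legVert k u w j = .inr ⟨E, i⟩ ∧ s(E.1.1, E.1.2) = s(u, w) := by
  rcases lt_or_gt_of_ne huw with h | h
  · exact ⟨_, _, (legVert_of_lt h j).trans (edgeVert_of_le _ hj1 hjk), rfl⟩
  · refine ⟨_, _, (legVert_of_gt h j).trans (edgeVert_of_le _ ?_ ?_), Sym2.eq_swap⟩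
    · omega
    · show k + 1 - j ≤ k
      omega

lemma not_adj_legVert (hk : 1 ≤ k) (hwu : w ≠ u) (hw'u : w' ≠ u) (hw'w : w' ≠ w) (hm1 : 1 ≤ m)
    (hmk : m ≤ k) (hj2 : 2 ≤ j) (hj : j ≤ k + 1) :
    ¬ (Subdiv ⊤ fun _ _ => k).Adj (legVert k u w' m) (legVert k u w j) := by
  intro hadj
  rcases hj.lt_or_eq with hj | rfl
  · obtain ⟨E, i, hE, hEuw⟩ := legVert_eq_inr (k := k) (j := j) hwu.symm (by omega) (by omega)
    obtain ⟨E', i', hE', hEuw'⟩ := legVert_eq_inr hw'u.symm hm1 hmk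
    rw [hE, hE'] at hadj
    obtain rfl : E' = E := hadj.1
    exact hw'w (Sym2.congr_right.1 (hEuw'.symm.trans hEuw))
  · rw [legVert_last] at hadj
    exact hwu (eq_of_adj_inl_legVert hk hw'u hw'w.symm hm1 (by omega) hadj.symm).1

lemma isSpider_legVert (hk : 1 ≤ k) (u : α) :
    IsSpider (Subdiv ⊤ fun _ _ => k) Sum.inl u k (legVert k u) where
  leg_zero _ := legVert_zero
  leg_last _ := legVert_last
  adj_leg _ hw _ hj := adj_legVert_succ hw hj
  eq_of_adj_branch _ hw _ ha _ hj1 hj hadj := eq_of_adj_inl_legVert hk hw ha hj1 hj hadj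
  not_adj_legs _ hw _ hw' hw'w _ hm1 hmk _ hj2 hj :=
    not_adj_legVert hk hw hw' hw'w hm1 hmk hj2 hj

end SubdividedComplete

lemma pow_succ_add_one_lt_of_lt_logb {d n k : ℕ} (hd : 2 ≤ d) (hn : 2 ≤ n)
    (h : (k : ℝ) < Real.logb d ((n : ℝ) - 1) - 1) : d ^ (k + 1) + 1 < n := by
  have h' : ((k + 1 : ℕ) : ℝ) < Real.logb d ((n : ℝ) - 1) := by push_cast; linarith
  have hd' : (1 : ℝ) < d := by exact_mod_cast hd
  have hn' : (0 : ℝ) < n - 1 := by linarith [show (2 : ℝ) ≤ n by exact_mod_cast hn]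
  rw [Real.lt_logb_iff_rpow_lt hd' hn', Real.rpow_natCast] at h'
  exact_mod_cast (by push_cast; linarith : ((d ^ (k + 1) + 1 : ℕ) : ℝ) < n)

/-- For `d, n ≥ 2` and `1 ≤ k < log_d (n-1) - 1`, the `k`-subdivision of `Kₙ`
has twin-width at least `d`. -/
theorem kSubdivision_complete_lower (d n k : ℕ) (hd : 2 ≤ d) (hn : 2 ≤ n) (hk : 1 ≤ k)
    (hlog : (k : ℝ) < Real.logb d ((n : ℝ) - 1) - 1)
    {β : Type*} [Fintype β] [DecidableEq β] (H : SimpleGraph β)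
    (hiso : Nonempty (H ≃g Subdiv (⊤ : SimpleGraph (Fin n)) fun _ _ => k)) :
    d ≤ tww H := by
  obtain ⟨e⟩ := hiso
  have hpow := pow_succ_add_one_lt_of_lt_logb hd hn hlog
  have : Nonempty β := ⟨e.symm (.inl ⟨0, by omega⟩)⟩
  have : Nontrivial (Fin n) := Fin.nontrivial_iff_two_le.2 hn
  refine le_csInf ⟨_, twwLE_card H⟩ fun D hD => ?_
  by_contra! hDd
  obtain ⟨PP, hcov, hred, P, hP, u, v, hvu, hu, hv, hsep⟩ :=
    hD.exists_collision (e.symm.injective.comp Sum.inl_injective)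
  have hcard := ((isSpider_legVert hk u).map e.symm).card_le hcov hred hP hu hv hvu hsep
  rw [Fintype.card_fin] at hcard
  have := Nat.pow_le_pow_left (show D + 1 ≤ d by omega) (k + 1)
  omega

end TwwPaper
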